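/- arXiv:1307.2223 — 2 statements merged into one kernel-verified Lean document; each statement's English description precedes it below -/
import Mathlib

section
/- If z ∈ L²(μ) with μ = μ₁ ⊗ ⋯ ⊗ μ_d a product probability measure, then z admits a decomposition z(x) = Σ_{u ⊆ {1,…,d}} z_u(x^u), where each summand depends only on the variables indexed by u, and this decomposition is unique under the constraint that ∫ z_u(x^u) dμ_i(x^i) = 0 for every u ≠ ∅ and every i ∈ u. -/
/-!
Write `E_u z (x) = ∫ z (x on u, y off u) dμ(y)` for the conditional expectation of `z` given
the coordinates in `u`. Since `μ` is a product of probability measures, `E_u ∘ E_v = E_{u ∩ v}`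
and `E_univ z = z`. The summands are the Möbius inverses
`z_u = ∑_{v ⊆ u} (-1)^{|u \ v|} E_v z`: their sum over all `u` is `E_univ z = z`, and
integrating out a variable `i ∈ u` turns each `E_v` into `E_{v \ {i}}`, so that the terms
cancel in pairs `v`, `v ∪ {i}`. Conversely, for any decomposition, `E_u` fixes the summands
`z_v` with `v ⊆ u` and kills the others (they have mean zero in a variable outside `u`), so
`∑_{v ⊆ u} z_v = E_u z` a.e. for every `u`, which determines each `z_u`.
-/

open MeasureTheory

/-- `IsHoeffdingDecomposition ν z f` says that the family `f u`, indexed by subsets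
`u ⊆ {1,…,d}`, is an ANOVA (Hoeffding–Sobol) decomposition of `z` with respect to the
product probability measure `μ = ⨂ᵢ ν i`: each summand `f u` is square-integrable,
depends only on the variables indexed by `u`, the summands add up to `z` a.e., and
every nonconstant summand integrates to zero in each of its own variables. -/
def IsHoeffdingDecomposition {d : ℕ} {Q : Fin d → Type*} [∀ i, MeasurableSpace (Q i)]
    (ν : ∀ i, Measure (Q i)) (z : (∀ i, Q i) → ℝ)
    (f : Finset (Fin d) → (∀ i, Q i) → ℝ) : Prop :=
  (∀ u, Measurable (f u)) ∧
  (∀ u, MemLp (f u) 2 (Measure.pi ν)) ∧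
  (∀ u, ∀ x y : ∀ i, Q i, (∀ i ∈ u, x i = y i) → f u x = f u y) ∧
  (∀ᵐ x ∂(Measure.pi ν), z x = ∑ u : Finset (Fin d), f u x) ∧
  (∀ u, u ≠ ∅ → ∀ i ∈ u,
    ∀ᵐ x ∂(Measure.pi ν), ∫ t, f u (Function.update x i t) ∂(ν i) = 0)

namespace Finset

variable {α R : Type*} [DecidableEq α] [Ring R]

lemma sum_powerset_insert_neg_one_pow_mul {s : Finset α} {i : α} (hi : i ∉ s)
    (g : Finset α → R) :
    ∑ v ∈ (insert i s).powerset, (-1 : R) ^ (insert i s \ v).card * g v =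
      ∑ v ∈ s.powerset, (-1 : R) ^ (s \ v).card * (g (insert i v) - g v) := by
  rw [sum_powerset_insert hi, ← sum_add_distrib]
  refine sum_congr rfl fun v hv => ?_
  have hiv : i ∉ v := fun h => hi (mem_powerset.1 hv h)
  rw [insert_sdiff_insert, sdiff_insert_of_notMem hi, insert_sdiff_of_notMem _ hiv,
    card_insert_of_notMem fun h => hi (mem_sdiff.1 h).1, pow_succ, mul_neg_one, neg_mul, mul_sub]
  abel

lemma sum_powerset_sum_powerset_neg_one_pow_mul (w : Finset α) (g : Finset α → R) :
    ∑ u ∈ w.powerset, ∑ v ∈ u.powerset, (-1 : R) ^ (u \ v).card * g v = g w := by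
  induction w using Finset.induction_on generalizing g with
  | empty => simp
  | insert i s hi ih =>
    have key : ∀ u ∈ s.powerset, ∑ v ∈ (insert i u).powerset,
        (-1 : R) ^ (insert i u \ v).card * g v =
          ∑ v ∈ u.powerset, (-1 : R) ^ (u \ v).card * g (insert i v) -
            ∑ v ∈ u.powerset, (-1 : R) ^ (u \ v).card * g v := fun u hu => by
      rw [sum_powerset_insert_neg_one_pow_mul (fun h => hi (mem_powerset.1 hu h))]
      simp only [mul_sub, sum_sub_distrib]
    rw [sum_powerset_insert hi, sum_congr rfl key, sum_sub_distrib, add_sub_cancel,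
      ih fun v => g (insert i v)]

lemma sum_powerset_neg_one_pow_mul_erase {u : Finset α} {i : α} (hi : i ∈ u)
    (g : Finset α → R) :
    ∑ v ∈ u.powerset, (-1 : R) ^ (u \ v).card * g (v.erase i) = 0 := by
  rw [← insert_erase hi, sum_powerset_insert_neg_one_pow_mul (notMem_erase i u)]
  refine sum_eq_zero fun v hv => ?_
  have hiv : i ∉ v := fun h => notMem_erase i u (mem_powerset.1 hv h)
  rw [erase_insert hiv, erase_eq_of_notMem hiv, sub_self, mul_zero]

lemma eq_of_sum_powerset_eq {M : Type*} [AddCancelCommMonoid M] {a b : Finset α → M}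
    (h : ∀ u : Finset α, ∑ v ∈ u.powerset, a v = ∑ v ∈ u.powerset, b v) : a = b := by
  funext u
  induction u using Finset.strongInduction with
  | H u ih =>
    have hu := h u
    rw [← add_sum_erase _ _ (mem_powerset_self u), ← add_sum_erase _ _ (mem_powerset_self u),
      sum_congr rfl fun v hv => ih v ((mem_powerset.1 (mem_of_mem_erase hv)).ssubset_of_ne
        (ne_of_mem_erase hv))] at hu
    exact add_right_cancel hu

end Finset

section CoordCondExp

variable {ι : Type*} [DecidableEq ι] {Q : ι → Type*} [∀ i, MeasurableSpace (Q i)]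

lemma measurable_piecewise_prod (u : Finset ι) :
    Measurable fun p : (∀ i, Q i) × (∀ i, Q i) => u.piecewise p.1 p.2 := by
  refine measurable_pi_lambda _ fun i => ?_
  by_cases hi : i ∈ u
  · simp only [Finset.piecewise_eq_of_mem _ _ _ hi]; fun_prop
  · simp only [Finset.piecewise_eq_of_notMem _ _ _ hi]; fun_prop

variable [Fintype ι]

lemma measurePreserving_piecewise (ν : ∀ i, Measure (Q i)) [∀ i, IsProbabilityMeasure (ν i)]
    (u : Finset ι) :
    MeasurePreserving (fun p : (∀ i, Q i) × (∀ i, Q i) => u.piecewise p.1 p.2)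
      ((Measure.pi ν).prod (Measure.pi ν)) (Measure.pi ν) := by
  refine ⟨measurable_piecewise_prod u, (Measure.pi_eq fun s hs => ?_).symm⟩
  have hpre : (fun p : (∀ i, Q i) × (∀ i, Q i) => u.piecewise p.1 p.2) ⁻¹' Set.univ.pi s =
      Set.univ.pi (u.piecewise s fun _ => Set.univ) ×ˢ
        Set.univ.pi (u.piecewise (fun _ => Set.univ) s) := by
    ext p
    simp only [Set.mem_preimage, Set.mem_prod, Set.mem_univ_pi, ← forall_and]
    refine forall_congr' fun i => ?_
    by_cases hi : i ∈ u <;> simp [hi]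
  rw [Measure.map_apply (measurable_piecewise_prod u) (MeasurableSet.univ_pi hs), hpre,
    Measure.prod_prod, Measure.pi_pi, Measure.pi_pi, ← Finset.prod_mul_distrib]
  refine Finset.prod_congr rfl fun i _ => ?_
  by_cases hi : i ∈ u <;> simp [hi]

variable (ν : ∀ i, Measure (Q i))

/-- The conditional expectation `E_u w` of `w` given the coordinates in `u`. -/
noncomputable def coordCondExp (u : Finset ι) (w : (∀ i, Q i) → ℝ) (x : ∀ i, Q i) : ℝ :=
  ∫ y, w (u.piecewise x y) ∂Measure.pi ν

variable {ν}

lemma dependsOn_coordCondExp (u : Finset ι) (w : (∀ i, Q i) → ℝ) :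
    DependsOn (coordCondExp ν u w) u := fun x x' h => by
  simp only [coordCondExp, u.piecewise_congr h fun _ _ => rfl]

lemma coordCondExp_const_mul (u : Finset ι) (c : ℝ) (w : (∀ i, Q i) → ℝ) :
    coordCondExp ν u (fun x => c * w x) = fun x => c * coordCondExp ν u w x :=
  funext fun _ => integral_const_mul c _

variable [∀ i, IsProbabilityMeasure (ν i)]

lemma measurable_coordCondExp {w : (∀ i, Q i) → ℝ} (hw : Measurable w) (u : Finset ι) :
    Measurable (coordCondExp ν u w) :=
  (hw.comp (measurable_piecewise_prod u)).stronglyMeasurable.integral_prod_right'.measurable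

lemma integral_comp_piecewise {G : (∀ i, Q i) → ℝ}
    (hG : AEStronglyMeasurable G (Measure.pi ν)) (u : Finset ι) :
    ∫ p, G (u.piecewise p.1 p.2) ∂(Measure.pi ν).prod (Measure.pi ν) =
      ∫ y, G y ∂Measure.pi ν := by
  have hmp := measurePreserving_piecewise ν u
  rw [← hmp.map_eq] at hG
  rw [← integral_map hmp.measurable.aemeasurable hG, hmp.map_eq]

lemma integrable_comp_piecewise {w : (∀ i, Q i) → ℝ} (hw : Integrable w (Measure.pi ν))
    (u : Finset ι) :
    Integrable (fun p : (∀ i, Q i) × (∀ i, Q i) => w (u.piecewise p.1 p.2))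
      ((Measure.pi ν).prod (Measure.pi ν)) :=
  (measurePreserving_piecewise ν u).integrable_comp_of_integrable hw

lemma ae_integrable_piecewise {w : (∀ i, Q i) → ℝ} (hw : Integrable w (Measure.pi ν))
    (u : Finset ι) :
    ∀ᵐ x ∂Measure.pi ν, Integrable (fun y => w (u.piecewise x y)) (Measure.pi ν) :=
  (integrable_comp_piecewise hw u).prod_right_ae

lemma integrable_coordCondExp {w : (∀ i, Q i) → ℝ} (hw : Integrable w (Measure.pi ν))
    (u : Finset ι) : Integrable (coordCondExp ν u w) (Measure.pi ν) :=
  (integrable_comp_piecewise hw u).integral_prod_left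

lemma memLp_coordCondExp {w : (∀ i, Q i) → ℝ} (hw : Measurable w)
    (hw2 : MemLp w 2 (Measure.pi ν)) (u : Finset ι) :
    MemLp (coordCondExp ν u w) 2 (Measure.pi ν) := by
  have hsq : Integrable (fun x => w x ^ 2) (Measure.pi ν) := hw2.integrable_sq
  have hmeas : Measurable (coordCondExp ν u w) := measurable_coordCondExp hw u
  rw [memLp_two_iff_integrable_sq hmeas.aestronglyMeasurable]
  refine (integrable_coordCondExp hsq u).mono' (hmeas.pow_const 2).aestronglyMeasurable ?_
  filter_upwards [ae_integrable_piecewise (hw2.integrable one_le_two) u,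
    ae_integrable_piecewise hsq u] with x hx hx2
  rw [Real.norm_eq_abs, abs_of_nonneg (sq_nonneg _)]
  exact even_two.convexOn_pow.map_integral_le (continuous_pow 2).continuousOn isClosed_univ
    (ae_of_all _ fun _ => trivial) hx hx2

lemma coordCondExp_eq_self {u : Finset ι} {w : (∀ i, Q i) → ℝ} (hw : DependsOn w u) :
    coordCondExp ν u w = w := funext fun x => by
  have hconst : ∀ y, w (u.piecewise x y) = w x := fun y =>
    hw fun i hi => u.piecewise_eq_of_mem _ _ hi
  simp [coordCondExp, hconst]

lemma coordCondExp_univ (w : (∀ i, Q i) → ℝ) : coordCondExp ν Finset.univ w = w :=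
  coordCondExp_eq_self (by simpa using dependsOn_univ w)

lemma coordCondExp_congr_ae {w w' : (∀ i, Q i) → ℝ} (h : w =ᵐ[Measure.pi ν] w')
    (u : Finset ι) : coordCondExp ν u w =ᵐ[Measure.pi ν] coordCondExp ν u w' := by
  have hcomp := (measurePreserving_piecewise ν u).quasiMeasurePreserving.ae_eq_comp h
  filter_upwards [Measure.ae_ae_of_ae_prod hcomp] with x hx
  exact integral_congr_ae hx

lemma coordCondExp_finsetSum {α : Type*} {s : Finset α} {w : α → (∀ i, Q i) → ℝ}
    (hw : ∀ k ∈ s, Integrable (w k) (Measure.pi ν)) (u : Finset ι) :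
    coordCondExp ν u (fun x => ∑ k ∈ s, w k x) =ᵐ[Measure.pi ν]
      fun x => ∑ k ∈ s, coordCondExp ν u (w k) x := by
  filter_upwards [(Filter.eventually_all_finset s).2 fun k hk =>
    ae_integrable_piecewise (hw k hk) u] with x hx
  exact integral_finsetSum s hx

lemma coordCondExp_coordCondExp {w : (∀ i, Q i) → ℝ} (hw : Integrable w (Measure.pi ν))
    (u v : Finset ι) :
    coordCondExp ν u (coordCondExp ν v w) =ᵐ[Measure.pi ν] coordCondExp ν (u ∩ v) w := by
  filter_upwards [ae_integrable_piecewise hw (u ∩ v)] with x hx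
  have hmerge : ∀ y y' : ∀ i, Q i,
      v.piecewise (u.piecewise x y) y' = (u ∩ v).piecewise x (v.piecewise y y') := by
    intro y y'
    funext i
    by_cases hv : i ∈ v <;> by_cases hu : i ∈ u <;> simp [hu, hv]
  set G := fun y => w ((u ∩ v).piecewise x y)
  calc coordCondExp ν u (coordCondExp ν v w) x
      = ∫ y, ∫ y', G (v.piecewise y y') ∂Measure.pi ν ∂Measure.pi ν := by
        simp only [coordCondExp, hmerge, G]
    _ = ∫ p, G (v.piecewise p.1 p.2) ∂(Measure.pi ν).prod (Measure.pi ν) :=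
        (integral_prod _ (integrable_comp_piecewise hx v)).symm
    _ = ∫ y, G y ∂Measure.pi ν := integral_comp_piecewise hx.aestronglyMeasurable v

lemma coordCondExp_erase_univ {w : (∀ i, Q i) → ℝ} (hw : Measurable w) (i : ι)
    (x : ∀ i, Q i) :
    coordCondExp ν (Finset.univ.erase i) w x = ∫ t, w (Function.update x i t) ∂ν i := by
  have hmp := measurePreserving_eval ν i
  have hF : AEStronglyMeasurable (fun t => w (Function.update x i t)) (ν i) :=
    (hw.comp (measurable_update x)).aestronglyMeasurable
  rw [← hmp.map_eq] at hF ⊢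
  simp only [coordCondExp, Finset.piecewise_erase_univ]
  exact (integral_map hmp.measurable.aemeasurable hF).symm

lemma coordCondExp_ae_eq_zero_of_notMem {w : (∀ i, Q i) → ℝ}
    (hw : Integrable w (Measure.pi ν)) {u : Finset ι} {i : ι} (hi : i ∉ u)
    (h0 : coordCondExp ν (Finset.univ.erase i) w =ᵐ[Measure.pi ν] 0) :
    coordCondExp ν u w =ᵐ[Measure.pi ν] 0 := by
  have htower := coordCondExp_coordCondExp hw u (Finset.univ.erase i)
  rw [Finset.inter_erase, Finset.inter_univ, Finset.erase_eq_of_notMem hi] at htower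
  calc coordCondExp ν u w
      =ᵐ[Measure.pi ν] coordCondExp ν u (coordCondExp ν (Finset.univ.erase i) w) :=
        htower.symm
    _ =ᵐ[Measure.pi ν] coordCondExp ν u 0 := coordCondExp_congr_ae h0 u
    _ = 0 := funext fun _ => by simp [coordCondExp]

end CoordCondExp

section HoeffdingTerm

variable {ι : Type*} [Fintype ι] [DecidableEq ι] {Q : ι → Type*}
  [∀ i, MeasurableSpace (Q i)] (ν : ∀ i, Measure (Q i))

noncomputable def hoeffdingTerm (z : (∀ i, Q i) → ℝ) (u : Finset ι) (x : ∀ i, Q i) : ℝ :=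
  ∑ v ∈ u.powerset, (-1 : ℝ) ^ (u \ v).card * coordCondExp ν v z x

variable {ν}

lemma dependsOn_hoeffdingTerm (z : (∀ i, Q i) → ℝ) (u : Finset ι) :
    DependsOn (hoeffdingTerm ν z u) u := fun x y h =>
  Finset.sum_congr rfl fun v hv => by
    rw [dependsOn_coordCondExp v z fun i hi => h i (Finset.mem_powerset.1 hv hi)]

variable [∀ i, IsProbabilityMeasure (ν i)]

lemma measurable_hoeffdingTerm {z : (∀ i, Q i) → ℝ} (hz : Measurable z) (u : Finset ι) :
    Measurable (hoeffdingTerm ν z u) :=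
  Finset.measurable_sum _ fun v _ => (measurable_coordCondExp hz v).const_mul _

lemma memLp_hoeffdingTerm {z : (∀ i, Q i) → ℝ} (hz : Measurable z)
    (hz2 : MemLp z 2 (Measure.pi ν)) (u : Finset ι) :
    MemLp (hoeffdingTerm ν z u) 2 (Measure.pi ν) :=
  memLp_finsetSum _ fun v _ => (memLp_coordCondExp hz hz2 v).const_mul _

lemma sum_hoeffdingTerm (z : (∀ i, Q i) → ℝ) (x : ∀ i, Q i) :
    ∑ u, hoeffdingTerm ν z u x = z x := by
  rw [← Finset.powerset_univ]
  exact (Finset.sum_powerset_sum_powerset_neg_one_pow_mul _ _).trans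
    (congrFun (coordCondExp_univ z) x)

lemma coordCondExp_erase_univ_hoeffdingTerm {z : (∀ i, Q i) → ℝ}
    (hz : Integrable z (Measure.pi ν)) {u : Finset ι} {i : ι} (hi : i ∈ u) :
    coordCondExp ν (Finset.univ.erase i) (hoeffdingTerm ν z u) =ᵐ[Measure.pi ν] 0 := by
  have hlin := coordCondExp_finsetSum (s := u.powerset)
    (w := fun v x => (-1 : ℝ) ^ (u \ v).card * coordCondExp ν v z x)
    (fun v _ => (integrable_coordCondExp hz v).const_mul _) (Finset.univ.erase i)
  have htower : ∀ᵐ x ∂Measure.pi ν, ∀ v ∈ u.powerset,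
      coordCondExp ν (Finset.univ.erase i) (coordCondExp ν v z) x =
        coordCondExp ν (v.erase i) z x :=
    (Filter.eventually_all_finset _).2 fun v _ => by
      have h := coordCondExp_coordCondExp hz (Finset.univ.erase i) v
      rwa [Finset.erase_inter, Finset.univ_inter] at h
  filter_upwards [hlin, htower] with x hx hx'
  simp only [coordCondExp_const_mul] at hx
  unfold hoeffdingTerm
  rw [hx, Finset.sum_congr rfl fun v hv => by rw [hx' v hv]]
  exact Finset.sum_powerset_neg_one_pow_mul_erase hi (coordCondExp ν · z x)

end HoeffdingTerm

namespace IsHoeffdingDecomposition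

variable {d : ℕ} {Q : Fin d → Type*} [∀ i, MeasurableSpace (Q i)] {ν : ∀ i, Measure (Q i)}
  [∀ i, IsProbabilityMeasure (ν i)] {z : (∀ i, Q i) → ℝ}

lemma sum_powerset_ae_eq_coordCondExp {f : Finset (Fin d) → (∀ i, Q i) → ℝ}
    (hf : IsHoeffdingDecomposition ν z f) (u : Finset (Fin d)) :
    (fun x => ∑ v ∈ u.powerset, f v x) =ᵐ[Measure.pi ν] coordCondExp ν u z := by
  obtain ⟨hmeas, hL2, hdep, hsum, hmean⟩ := hf
  have hint : ∀ v, Integrable (f v) (Measure.pi ν) := fun v => (hL2 v).integrable one_le_two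
  have hterm : ∀ v, coordCondExp ν u (f v) =ᵐ[Measure.pi ν]
      fun x => if v ⊆ u then f v x else 0 := by
    intro v
    by_cases hvu : v ⊆ u
    · simp only [hvu, if_true]
      exact (coordCondExp_eq_self (DependsOn.mono (by simpa using hvu) (hdep v))).eventuallyEq
    · obtain ⟨i, hiv, hiu⟩ := Finset.not_subset.1 hvu
      simp only [hvu, if_false]
      refine coordCondExp_ae_eq_zero_of_notMem (hint v) hiu ?_
      filter_upwards [hmean v (Finset.ne_empty_of_mem hiv) i hiv] with x hx
      rw [coordCondExp_erase_univ (hmeas v), hx, Pi.zero_apply]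
  calc (fun x => ∑ v ∈ u.powerset, f v x)
      = fun x => ∑ v, if v ⊆ u then f v x else 0 := by
        simp only [← Finset.sum_filter, Finset.filter_subset_univ]
    _ =ᵐ[Measure.pi ν] fun x => ∑ v, coordCondExp ν u (f v) x := by
        filter_upwards [ae_all_iff.2 hterm] with x hx
        simp only [hx]
    _ =ᵐ[Measure.pi ν] coordCondExp ν u (fun x => ∑ v, f v x) :=
        (coordCondExp_finsetSum (fun v _ => hint v) u).symm
    _ =ᵐ[Measure.pi ν] coordCondExp ν u z :=
        coordCondExp_congr_ae (hsum.mono fun _ hx => hx.symm) u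

lemma ae_eq {f g : Finset (Fin d) → (∀ i, Q i) → ℝ} (hf : IsHoeffdingDecomposition ν z f)
    (hg : IsHoeffdingDecomposition ν z g) (u : Finset (Fin d)) : f u =ᵐ[Measure.pi ν] g u := by
  have hpartial : ∀ᵐ x ∂Measure.pi ν,
      ∀ w : Finset (Fin d), ∑ v ∈ w.powerset, f v x = ∑ v ∈ w.powerset, g v x :=
    ae_all_iff.2 fun w => (hf.sum_powerset_ae_eq_coordCondExp w).trans
      (hg.sum_powerset_ae_eq_coordCondExp w).symm
  filter_upwards [hpartial] with x hx
  exact congrFun (Finset.eq_of_sum_powerset_eq hx) u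

end IsHoeffdingDecomposition

lemma isHoeffdingDecomposition_hoeffdingTerm {d : ℕ} {Q : Fin d → Type*}
    [∀ i, MeasurableSpace (Q i)] {ν : ∀ i, Measure (Q i)} [∀ i, IsProbabilityMeasure (ν i)]
    {z : (∀ i, Q i) → ℝ} (hz : Measurable z) (hz2 : MemLp z 2 (Measure.pi ν)) :
    IsHoeffdingDecomposition ν z (hoeffdingTerm ν z) := by
  refine ⟨measurable_hoeffdingTerm hz, memLp_hoeffdingTerm hz hz2,
    fun u _ _ h => dependsOn_hoeffdingTerm z u h,
    ae_of_all _ fun x => (sum_hoeffdingTerm z x).symm, fun u _ i hi => ?_⟩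
  filter_upwards [coordCondExp_erase_univ_hoeffdingTerm (hz2.integrable one_le_two) hi]
    with x hx
  rwa [← coordCondExp_erase_univ (measurable_hoeffdingTerm hz u)]

/-- Hoeffding–Sobol decomposition: every `z ∈ L²(μ)` for a product probability measure
`μ = μ₁ ⊗ ⋯ ⊗ μ_d` admits a decomposition `z = ∑_{u ⊆ {1,…,d}} z_u(x^u)` into summands
depending only on the variables in `u` and with zero mean in each of their own variables,
and such a decomposition is unique up to a.e. equality of each summand. -/
theorem hoeffding_sobol_decomposition {d : ℕ} {Q : Fin d → Type*}
    [∀ i, MeasurableSpace (Q i)]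
    (ν : ∀ i, Measure (Q i)) [∀ i, IsProbabilityMeasure (ν i)]
    (z : (∀ i, Q i) → ℝ) (hz : Measurable z) (hz2 : MemLp z 2 (Measure.pi ν)) :
    (∃ f, IsHoeffdingDecomposition ν z f) ∧
    (∀ f g, IsHoeffdingDecomposition ν z f → IsHoeffdingDecomposition ν z g →
      ∀ u, f u =ᵐ[Measure.pi ν] g u) :=
  ⟨⟨hoeffdingTerm ν z, isHoeffdingDecomposition_hoeffdingTerm hz hz2⟩,
    fun _ _ hf hg => hf.ae_eq hg⟩
end

section
/- In the two-level recursive co-kriging model Z₂(x) = ρ₁ Z₁*(x) + δ₂(x) with Z₁* ⊥ δ₂, where Z₁* has mean μ₁(x) and covariance k₁(x,x̃), δ₂ has mean μ_δ(x) and covariance k_δ(x,x̃), and ρ₁ is a random scalar independent of (Z₁*, δ₂) with E[ρ₁] = ρ̂₁ and E[ρ₁²] = ρ̂₁², then Z₂ has mean ρ̂₁ μ₁(x) + μ_δ(x) and covariance Cov(Z₂(x), Z₂(x̃)) = ρ̂₁² k₁(x,x̃) + k_δ(x,x̃) + Var(ρ₁) μ₁(x)μ₁(x̃). -/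
open MeasureTheory ProbabilityTheory

/-! Expanding `Z₂(x) Z₂(x̃) = ρ₁² Z₁*(x) Z₁*(x̃) + ρ₁ (Z₁*(x) δ₂(x̃) + Z₁*(x̃) δ₂(x)) + δ₂(x) δ₂(x̃)`,
each product of independent factors integrates to the product of the integrals; the covariance
formula is then algebra, the term `Var(ρ₁) μ₁(x) μ₁(x̃)` coming from `E[ρ₁²] ≠ E[ρ₁]²`. -/

section

variable {Ω : Type*} [MeasurableSpace Ω] {P : Measure Ω}

theorem integrable_of_integrable_mul_self [IsFiniteMeasure P] {X : Ω → ℝ}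
    (hX : AEStronglyMeasurable X P) (hXX : Integrable (fun ω => X ω * X ω) P) :
    Integrable X P :=
  ((memLp_two_iff_integrable_sq hX).2 (by simpa only [sq] using hXX)).integrable one_le_two

namespace ProbabilityTheory.IndepFun

variable {R A D : Ω → ℝ}

theorem integrable_mul_add (hRA : R ⟂ᵢ[P] A) (hR : Integrable R P) (hA : Integrable A P)
    (hD : Integrable D P) : Integrable (fun ω => R ω * A ω + D ω) P :=
  (hRA.integrable_mul hR hA).add hD

theorem integral_mul_add (hRA : R ⟂ᵢ[P] A) (hR : Integrable R P) (hA : Integrable A P)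
    (hD : Integrable D P) :
    ∫ ω, R ω * A ω + D ω ∂P = (∫ ω, R ω ∂P) * (∫ ω, A ω ∂P) + ∫ ω, D ω ∂P := by
  rw [integral_add (f := fun ω => R ω * A ω) (hRA.integrable_mul hR hA) hD,
    hRA.integral_fun_mul_eq_mul_integral hR.aestronglyMeasurable hA.aestronglyMeasurable]

end ProbabilityTheory.IndepFun

theorem integral_mul_add_mul_mul_add {R A A' D D' : Ω → ℝ}
    (hRind : R ⟂ᵢ[P] fun ω => (A ω, A' ω, D ω, D' ω))
    (hind : (fun ω => (A ω, A' ω)) ⟂ᵢ[P] fun ω => (D ω, D' ω))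
    (hR : Integrable R P) (hR2 : Integrable (fun ω => R ω ^ 2) P)
    (hA : Integrable A P) (hA' : Integrable A' P) (hD : Integrable D P) (hD' : Integrable D' P)
    (hAA' : Integrable (fun ω => A ω * A' ω) P) (hDD' : Integrable (fun ω => D ω * D' ω) P) :
    ∫ ω, (R ω * A ω + D ω) * (R ω * A' ω + D' ω) ∂P
      = (∫ ω, R ω ^ 2 ∂P) * (∫ ω, A ω * A' ω ∂P)
        + (∫ ω, R ω ∂P) * ((∫ ω, A ω ∂P) * (∫ ω, D' ω ∂P) + (∫ ω, A' ω ∂P) * (∫ ω, D ω ∂P))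
        + ∫ ω, D ω * D' ω ∂P := by
  set V := fun ω => A ω * D' ω + A' ω * D ω
  have hAD' : A ⟂ᵢ[P] D' := hind.comp measurable_fst measurable_snd
  have hA'D : A' ⟂ᵢ[P] D := hind.comp measurable_snd measurable_fst
  have hRV : R ⟂ᵢ[P] V :=
    hRind.comp (ψ := fun p : ℝ × ℝ × ℝ × ℝ => p.1 * p.2.2.2 + p.2.1 * p.2.2.1)
      measurable_id (by fun_prop)
  have hR2AA' : (fun ω => R ω ^ 2) ⟂ᵢ[P] fun ω => A ω * A' ω :=
    hRind.comp (ψ := fun p : ℝ × ℝ × ℝ × ℝ => p.1 * p.2.1) (measurable_id.pow_const 2)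
      (by fun_prop)
  have hV : Integrable V P := hAD'.integrable_mul_add hA hD' (hA'D.integrable_mul hA' hD)
  have hV_mean : ∫ ω, V ω ∂P
      = (∫ ω, A ω ∂P) * (∫ ω, D' ω ∂P) + (∫ ω, A' ω ∂P) * (∫ ω, D ω ∂P) := by
    rw [hAD'.integral_mul_add (D := fun ω => A' ω * D ω) hA hD' (hA'D.integrable_mul hA' hD),
      hA'D.integral_fun_mul_eq_mul_integral hA'.aestronglyMeasurable hD.aestronglyMeasurable]
  calc ∫ ω, (R ω * A ω + D ω) * (R ω * A' ω + D' ω) ∂P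
      = ∫ ω, R ω ^ 2 * (A ω * A' ω) + (R ω * V ω + D ω * D' ω) ∂P := by
        congr 1; ext ω; simp only [V]; ring
    _ = (∫ ω, R ω ^ 2 ∂P) * (∫ ω, A ω * A' ω ∂P)
          + ((∫ ω, R ω ∂P) * (∫ ω, V ω ∂P) + ∫ ω, D ω * D' ω ∂P) := by
        rw [hR2AA'.integral_mul_add hR2 hAA' (hRV.integrable_mul_add hR hV hDD'),
          hRV.integral_mul_add hR hV hDD']
    _ = _ := by
        rw [hV_mean]
        ring

end

theorem cokriging_two_level_mean_cov_general
    {𝒳 Ω : Type*} [MeasurableSpace Ω] (P : Measure Ω) [IsProbabilityMeasure P]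
    (Z1 δ : 𝒳 → Ω → ℝ) (ρ : Ω → ℝ)
    (μ1 μδ : 𝒳 → ℝ) (k1 kδ : 𝒳 → 𝒳 → ℝ) (ρhat ρ2hat : ℝ)
    (hZ1meas : ∀ x, Measurable (Z1 x)) (hδmeas : ∀ x, Measurable (δ x))
    -- second-order structure of `Z₁*` and `δ₂`
    (hZ1mean : ∀ x, ∫ ω, Z1 x ω ∂P = μ1 x)
    (hZ1int : ∀ x y, Integrable (fun ω => Z1 x ω * Z1 y ω) P)
    (hZ1cov : ∀ x y, ∫ ω, Z1 x ω * Z1 y ω ∂P - μ1 x * μ1 y = k1 x y)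
    (hδmean : ∀ x, ∫ ω, δ x ω ∂P = μδ x)
    (hδint : ∀ x y, Integrable (fun ω => δ x ω * δ y ω) P)
    (hδcov : ∀ x y, ∫ ω, δ x ω * δ y ω ∂P - μδ x * μδ y = kδ x y)
    -- moments of the adjustment coefficient
    (hρint : Integrable ρ P) (hρ2int : Integrable (fun ω => ρ ω ^ 2) P)
    (hρmean : ∫ ω, ρ ω ∂P = ρhat) (hρ2 : ∫ ω, ρ ω ^ 2 ∂P = ρ2hat)
    -- independence: `ρ₁ ⊥ (Z₁*, δ₂)` and `Z₁* ⊥ δ₂`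
    (hindepρ : ∀ x y, IndepFun ρ (fun ω => (Z1 x ω, Z1 y ω, δ x ω, δ y ω)) P)
    (hindep : ∀ x y, IndepFun (fun ω => (Z1 x ω, Z1 y ω)) (fun ω => (δ x ω, δ y ω)) P)
    -- the process `Z₂ = ρ₁ Z₁* + δ₂`
    (Z2 : 𝒳 → Ω → ℝ) (hZ2 : ∀ x ω, Z2 x ω = ρ ω * Z1 x ω + δ x ω) :
    (∀ x, ∫ ω, Z2 x ω ∂P = ρhat * μ1 x + μδ x) ∧
    (∀ x xt, ∫ ω, Z2 x ω * Z2 xt ω ∂P - (∫ ω, Z2 x ω ∂P) * (∫ ω, Z2 xt ω ∂P)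
      = ρ2hat * k1 x xt + kδ x xt + (ρ2hat - ρhat ^ 2) * (μ1 x * μ1 xt)) := by
  have hZ1L1 x : Integrable (Z1 x) P :=
    integrable_of_integrable_mul_self (hZ1meas x).aestronglyMeasurable (hZ1int x x)
  have hδL1 x : Integrable (δ x) P :=
    integrable_of_integrable_mul_self (hδmeas x).aestronglyMeasurable (hδint x x)
  have hmean x : ∫ ω, Z2 x ω ∂P = ρhat * μ1 x + μδ x := by
    have hρZ1 : ρ ⟂ᵢ[P] Z1 x := (hindepρ x x).comp measurable_id measurable_fst
    simp only [hZ2]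
    rw [hρZ1.integral_mul_add hρint (hZ1L1 x) (hδL1 x), hρmean, hZ1mean, hδmean]
  refine ⟨hmean, fun x xt => ?_⟩
  simp only [hZ2] at hmean ⊢
  rw [integral_mul_add_mul_mul_add (hindepρ x xt) (hindep x xt) hρint hρ2int (hZ1L1 x)
    (hZ1L1 xt) (hδL1 x) (hδL1 xt) (hZ1int x xt) (hδint x xt), hmean x, hmean xt,
    hρ2, hρmean, hZ1mean, hZ1mean, hδmean, hδmean]
  linear_combination ρ2hat * hZ1cov x xt + hδcov x xt

/-- In the two-level recursive co-kriging model `Z₂(x) = ρ₁ Z₁*(x) + δ₂(x)` with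
`Z₁* ⊥ δ₂` and `ρ₁` a random scalar independent of `(Z₁*, δ₂)`, with `E[ρ₁] = ρ̂₁` and
`E[ρ₁²] = ρ̂₁²`, the process `Z₂` has mean `ρ̂₁ μ₁(x) + μ_δ(x)` and covariance
`Cov(Z₂(x),Z₂(x̃)) = ρ̂₁² k₁(x,x̃) + k_δ(x,x̃) + Var(ρ₁) μ₁(x)μ₁(x̃)`. -/
theorem cokriging_two_level_mean_cov
    {𝒳 Ω : Type*} [MeasurableSpace Ω] (P : Measure Ω) [IsProbabilityMeasure P]
    (Z1 δ : 𝒳 → Ω → ℝ) (ρ : Ω → ℝ)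
    (μ1 μδ : 𝒳 → ℝ) (k1 kδ : 𝒳 → 𝒳 → ℝ) (ρhat ρ2hat : ℝ)
    (hZ1meas : ∀ x, Measurable (Z1 x)) (hδmeas : ∀ x, Measurable (δ x))
    (hρmeas : Measurable ρ)
    -- second-order structure of `Z₁*` and `δ₂`
    (hZ1mean : ∀ x, ∫ ω, Z1 x ω ∂P = μ1 x)
    (hZ1int : ∀ x y, Integrable (fun ω => Z1 x ω * Z1 y ω) P)
    (hZ1cov : ∀ x y, ∫ ω, Z1 x ω * Z1 y ω ∂P - μ1 x * μ1 y = k1 x y)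
    (hδmean : ∀ x, ∫ ω, δ x ω ∂P = μδ x)
    (hδint : ∀ x y, Integrable (fun ω => δ x ω * δ y ω) P)
    (hδcov : ∀ x y, ∫ ω, δ x ω * δ y ω ∂P - μδ x * μδ y = kδ x y)
    -- moments of the adjustment coefficient
    (hρint : Integrable ρ P) (hρ2int : Integrable (fun ω => ρ ω ^ 2) P)
    (hρmean : ∫ ω, ρ ω ∂P = ρhat) (hρ2 : ∫ ω, ρ ω ^ 2 ∂P = ρ2hat)
    -- independence: `ρ₁ ⊥ (Z₁*, δ₂)` and `Z₁* ⊥ δ₂`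
    (hindepρ : ∀ x y, IndepFun ρ (fun ω => (Z1 x ω, Z1 y ω, δ x ω, δ y ω)) P)
    (hindep : ∀ x y, IndepFun (fun ω => (Z1 x ω, Z1 y ω)) (fun ω => (δ x ω, δ y ω)) P)
    -- the process `Z₂ = ρ₁ Z₁* + δ₂`
    (Z2 : 𝒳 → Ω → ℝ) (hZ2 : ∀ x ω, Z2 x ω = ρ ω * Z1 x ω + δ x ω) :
    (∀ x, ∫ ω, Z2 x ω ∂P = ρhat * μ1 x + μδ x) ∧
    (∀ x xt, ∫ ω, Z2 x ω * Z2 xt ω ∂P - (∫ ω, Z2 x ω ∂P) * (∫ ω, Z2 xt ω ∂P)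
      = ρ2hat * k1 x xt + kδ x xt + (ρ2hat - ρhat ^ 2) * (μ1 x * μ1 xt)) :=
  cokriging_two_level_mean_cov_general P Z1 δ ρ μ1 μδ k1 kδ ρhat ρ2hat hZ1meas hδmeas hZ1mean hZ1int
    hZ1cov hδmean hδint hδcov hρint hρ2int hρmean hρ2 hindepρ hindep Z2 hZ2
end
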